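/- Let σ be a ground solution of a flat disunification problem Γ and define the assignment S by S_X := {D ∈ At_nv | σ(X) ⊑ σ(D)}, where At_nv is the set of non-variable atoms of Γ. Then S is acyclic, and the induced local substitution σ_S satisfies σ(C) ⊑ σ_S(C) for every concept term C built over the atoms of Γ. -/

import Mathlib

inductive EL (N R : Type) : Type where
  | name : N → EL N R
  | top  : EL N R
  | conj : EL N R → EL N R → EL N R
  | ex   : R → EL N R → EL N R

structure Interp (N R : Type) where
  dom : Type
  nonempty : Nonempty dom
  cname : N → Set dom
  role : R → Set (dom × dom)

def Interp.sem {N R : Type} (I : Interp N R) : EL N R → Set I.dom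
  | .name A => I.cname A
  | .top => Set.univ
  | .conj C D => I.sem C ∩ I.sem D
  | .ex r C => {x | ∃ y, (x, y) ∈ I.role r ∧ y ∈ I.sem C}

/-- Semantic subsumption: `C ⊑ D` iff `C^I ⊆ D^I` for every interpretation `I`. -/
def Subsume {N R : Type} (C D : EL N R) : Prop :=
  ∀ I : Interp N R, I.sem C ⊆ I.sem D

/-- An atom is a concept name or an existential restriction. -/
def IsAtomEL {N R : Type} : EL N R → Prop
  | .name _ => True
  | .ex _ _ => True
  | _ => False

/-- Top-level atoms of a concept term. -/
def tla {N R : Type} : EL N R → List (EL N R)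
  | .conj C D => tla C ++ tla D
  | .top => []
  | .name A => [EL.name A]
  | .ex r C => [EL.ex r C]

/-- Conjunction of a nonempty list of terms `C :: Cs` (no extra ⊤ conjunct). -/
def conjs {N R : Type} : EL N R → List (EL N R) → EL N R
  | C, [] => C
  | C, D :: Ds => .conj C (conjs D Ds)

/-- Conjunction of a list of terms; the empty conjunction is ⊤. -/
def conjList {N R : Type} : List (EL N R) → EL N R
  | [] => .top
  | C :: Cs => conjs C Cs

/-- Symbol count: each concept name (and ⊤) is one symbol, each `∃r.` is one symbol. -/
def sizeEL {N R : Type} : EL N R → ℕ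
  | .name _ => 1
  | .top => 1
  | .conj C D => sizeEL C + sizeEL D + 1
  | .ex _ C => sizeEL C + 1

/-- Groundness: no occurrence of a variable (names are `V ⊕ K`, variables on the left). -/
def isGround {V K R : Type} : EL (V ⊕ K) R → Prop
  | .name (Sum.inl _) => False
  | .name (Sum.inr _) => True
  | .top => True
  | .conj C D => isGround C ∧ isGround D
  | .ex _ C => isGround C

/-- Application of a substitution `σ : V → EL (V ⊕ K) R` to a concept term. -/
def applySub {V K R : Type} (σ : V → EL (V ⊕ K) R) : EL (V ⊕ K) R → EL (V ⊕ K) R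
  | .name (Sum.inl X) => σ X
  | .name (Sum.inr A) => .name (Sum.inr A)
  | .top => .top
  | .conj C D => .conj (applySub σ C) (applySub σ D)
  | .ex r C => .ex r (applySub σ C)

/-- The variable `Y` occurs in the concept term. -/
def occursVar {V K R : Type} (Y : V) : EL (V ⊕ K) R → Prop
  | .name (Sum.inl X) => X = Y
  | .name (Sum.inr _) => False
  | .top => False
  | .conj C D => occursVar Y C ∨ occursVar Y D
  | .ex _ C => occursVar Y C

/-! Role depth strictly decreases from `σ X` to `σ Y` whenever `σ X ⊑ ∃r.σ Y`, as one sees on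
a finite chain interpretation. Hence "`Y` occurs in an atom of `S_X`" is well-founded: `S` is
acyclic and `σ_S` can be defined by well-founded recursion. Well-founded induction then gives
`σ X ⊑ σ_S X`, and monotonicity of substitution extends this to every concept term. -/

namespace EL

variable {N R : Type}

def roleDepth : EL N R → ℕ
  | .name _ => 0
  | .top => 0
  | .conj C D => max C.roleDepth D.roleDepth
  | .ex _ C => C.roleDepth + 1

end EL

def chainInterp (N R : Type) (n : ℕ) : Interp N R where
  dom := Fin (n + 1)
  nonempty := ⟨0⟩
  cname := fun _ => Set.univ
  role := fun _ => {p | p.2.val = p.1.val + 1}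

theorem mem_sem_chainInterp_iff {N R : Type} {n : ℕ} (C : EL N R) (i : Fin (n + 1)) :
    i ∈ (chainInterp N R n).sem C ↔ i.val + C.roleDepth ≤ n := by
  have hi := i.isLt
  induction C generalizing i with
  | name A => exact iff_of_true trivial (by simp only [EL.roleDepth]; omega)
  | top => exact iff_of_true trivial (by simp only [EL.roleDepth]; omega)
  | conj C D ihC ihD =>
    refine (and_congr (ihC i hi) (ihD i hi)).trans ?_
    rw [EL.roleDepth]
    omega
  | ex r C ih =>
    show (∃ j : Fin (n + 1), j.val = i.val + 1 ∧ j ∈ (chainInterp N R n).sem C) ↔ _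
    simp only [EL.roleDepth]
    constructor
    · rintro ⟨j, hj, hjC⟩
      have := (ih j j.isLt).1 hjC
      omega
    · intro h
      exact ⟨⟨i.val + 1, by omega⟩, rfl,
        (ih _ (by simp only; omega)).2 (by simp only; omega)⟩

theorem roleDepth_lt_of_subsume_ex {N R : Type} {C D : EL N R} {r : R}
    (h : Subsume C (.ex r D)) : D.roleDepth < C.roleDepth := by
  have hroot := (mem_sem_chainInterp_iff (n := C.roleDepth) C 0).2 (by simp)
  obtain ⟨j, hj, hjD⟩ := h (chainInterp N R C.roleDepth) hroot
  have hj' : (j : Fin (C.roleDepth + 1)).val = 1 := hj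
  have := (mem_sem_chainInterp_iff D j).1 hjD
  omega

section Subsume

variable {N R : Type}

theorem Subsume.rfl {C : EL N R} : Subsume C C := fun _ _ h => h

theorem Subsume.trans {C D E : EL N R} (h₁ : Subsume C D) (h₂ : Subsume D E) : Subsume C E :=
  fun I _ hx => h₂ I (h₁ I hx)

theorem Subsume.ex {C D : EL N R} (r : R) (h : Subsume C D) : Subsume (.ex r C) (.ex r D) := by
  rintro I x ⟨y, hxy, hyC⟩
  exact ⟨y, hxy, h I hyC⟩

theorem Subsume.conj {C C' D D' : EL N R} (hC : Subsume C C') (hD : Subsume D D') :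
    Subsume (.conj C D) (.conj C' D') := by
  rintro I x ⟨hxC, hxD⟩
  exact ⟨hC I hxC, hD I hxD⟩

theorem mem_sem_conjs_iff (I : Interp N R) (C : EL N R) (Cs : List (EL N R)) (x : I.dom) :
    x ∈ I.sem (conjs C Cs) ↔ ∀ D ∈ C :: Cs, x ∈ I.sem D := by
  induction Cs generalizing C with
  | nil => simp [conjs]
  | cons D Ds ih =>
    rw [List.forall_mem_cons, ← ih]
    rfl

theorem mem_sem_conjList_iff (I : Interp N R) (Cs : List (EL N R)) (x : I.dom) :
    x ∈ I.sem (conjList Cs) ↔ ∀ C ∈ Cs, x ∈ I.sem C := by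
  cases Cs with
  | nil => simp [conjList, Interp.sem]
  | cons C Cs => exact mem_sem_conjs_iff I C Cs x

theorem subsume_conjList_iff (E : EL N R) (Cs : List (EL N R)) :
    Subsume E (conjList Cs) ↔ ∀ C ∈ Cs, Subsume E C := by
  simp only [Subsume, Set.subset_def, mem_sem_conjList_iff]
  exact ⟨fun h C hC I x hx => h I x hx C hC, fun h I x hx C hC => h C hC I x hx⟩

end Subsume

section Substitution

variable {V K R : Type}

theorem isGround_conjList {Cs : List (EL (V ⊕ K) R)} (h : ∀ C ∈ Cs, isGround C) :
    isGround (conjList Cs) := by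
  cases Cs with
  | nil => trivial
  | cons C Cs =>
    induction Cs generalizing C with
    | nil => exact h C (by simp)
    | cons D Ds ih => exact ⟨h C (by simp), ih D fun E hE => h E (by simp_all)⟩

theorem applySub_congr {σ τ : V → EL (V ⊕ K) R} {C : EL (V ⊕ K) R}
    (h : ∀ Y, occursVar Y C → σ Y = τ Y) : applySub σ C = applySub τ C := by
  induction C with
  | name n => rcases n with X | A; exacts [h X rfl, rfl]
  | top => rfl
  | conj C D ihC ihD =>
    simp only [occursVar] at h
    simp only [applySub, ihC fun Y hY => h Y (.inl hY), ihD fun Y hY => h Y (.inr hY)]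
  | ex r C ih => simp only [applySub, ih h]

theorem isGround_applySub {σ : V → EL (V ⊕ K) R} {C : EL (V ⊕ K) R}
    (h : ∀ Y, occursVar Y C → isGround (σ Y)) : isGround (applySub σ C) := by
  induction C with
  | name n => rcases n with X | A; exacts [h X rfl, trivial]
  | top => trivial
  | conj C D ihC ihD => exact ⟨ihC fun Y hY => h Y (.inl hY), ihD fun Y hY => h Y (.inr hY)⟩
  | ex r C ih => exact ih h

theorem subsume_applySub {σ τ : V → EL (V ⊕ K) R} {C : EL (V ⊕ K) R}
    (h : ∀ Y, occursVar Y C → Subsume (σ Y) (τ Y)) :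
    Subsume (applySub σ C) (applySub τ C) := by
  induction C with
  | name n => rcases n with X | A; exacts [h X rfl, Subsume.rfl]
  | top => exact Subsume.rfl
  | conj C D ihC ihD => exact (ihC fun Y hY => h Y (.inl hY)).conj (ihD fun Y hY => h Y (.inr hY))
  | ex r C ih => exact (ih h).ex r

end Substitution

section LocalSubstitution

variable {V K R : Type} (σ : V → EL (V ⊕ K) R) (Atnv : List (EL (V ⊕ K) R))

def IsFlatNonVarAtom (D : EL (V ⊕ K) R) : Prop :=
  (∃ A : K, D = EL.name (Sum.inr A)) ∨ ∃ (r : R) (N' : V ⊕ K), D = EL.ex r (EL.name N')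

def OccursInAssignment (X Y : V) : Prop :=
  ∃ D ∈ Atnv, Subsume (σ X) (applySub σ D) ∧ occursVar Y D

open Classical in
noncomputable def assignment (X : V) : List (EL (V ⊕ K) R) :=
  Atnv.filter fun D => Subsume (σ X) (applySub σ D)

variable {σ Atnv}

theorem mem_assignment_iff {X : V} {D : EL (V ⊕ K) R} :
    D ∈ assignment σ Atnv X ↔ D ∈ Atnv ∧ Subsume (σ X) (applySub σ D) := by
  simp [assignment]

theorem OccursInAssignment.roleDepth_lt (hflat : ∀ D ∈ Atnv, IsFlatNonVarAtom D) {X Y : V}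
    (h : OccursInAssignment σ Atnv X Y) : (σ Y).roleDepth < (σ X).roleDepth := by
  obtain ⟨D, hD, hsub, hocc⟩ := h
  rcases hflat D hD with ⟨A, rfl⟩ | ⟨r, N' | A, rfl⟩
  · exact hocc.elim
  · obtain rfl : N' = Y := hocc
    exact roleDepth_lt_of_subsume_ex hsub
  · exact hocc.elim

theorem wellFounded_swap_occursInAssignment (hflat : ∀ D ∈ Atnv, IsFlatNonVarAtom D) :
    WellFounded (Function.swap (OccursInAssignment σ Atnv)) :=
  Subrelation.wf (fun h => h.roleDepth_lt hflat)
    (InvImage.wf (fun X => (σ X).roleDepth) wellFounded_lt)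

variable (hwf : WellFounded (Function.swap (OccursInAssignment σ Atnv)))

open Classical in
/-- A variable `Y` with `¬ OccursInAssignment σ Atnv X Y` is never looked up (see `localSub_eq`),
so the `⊤` placed there is irrelevant. -/
noncomputable def localSub : V → EL (V ⊕ K) R :=
  hwf.fix fun X rec =>
    conjList ((assignment σ Atnv X).map
      (applySub fun Y => if h : OccursInAssignment σ Atnv X Y then rec Y h else .top))

theorem localSub_eq (X : V) :
    localSub hwf X = conjList ((assignment σ Atnv X).map (applySub (localSub hwf))) := by
  rw [localSub, hwf.fix_eq]
  congr 1
  refine List.map_congr_left fun D hD => applySub_congr fun Y hY => ?_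
  obtain ⟨hDmem, hsub⟩ := mem_assignment_iff.1 hD
  have hocc : OccursInAssignment σ Atnv X Y := ⟨D, hDmem, hsub, hY⟩
  simp only [hocc, dif_pos]

theorem subsume_localSub_iff (X : V) (E : EL (V ⊕ K) R) :
    Subsume E (localSub hwf X) ↔
      ∀ D ∈ Atnv, Subsume (σ X) (applySub σ D) → Subsume E (applySub (localSub hwf) D) := by
  simp only [localSub_eq hwf X, subsume_conjList_iff, List.forall_mem_map, mem_assignment_iff,
    and_imp]

theorem isGround_localSub (X : V) : isGround (localSub hwf X) := by
  induction X using hwf.induction with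
  | _ X ih =>
  rw [localSub_eq]
  refine isGround_conjList fun C hC => ?_
  obtain ⟨D, hD, rfl⟩ := List.mem_map.1 hC
  obtain ⟨hDmem, hsub⟩ := mem_assignment_iff.1 hD
  exact isGround_applySub fun Y hY => ih Y ⟨D, hDmem, hsub, hY⟩

theorem subsume_localSub (X : V) : Subsume (σ X) (localSub hwf X) := by
  induction X using hwf.induction with
  | _ X ih =>
  rw [localSub_eq, subsume_conjList_iff, List.forall_mem_map]
  intro D hD
  obtain ⟨hDmem, hsub⟩ := mem_assignment_iff.1 hD
  exact hsub.trans (subsume_applySub fun Y hY => ih Y ⟨D, hDmem, hsub, hY⟩)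

end LocalSubstitution

theorem stmt19_general {V K R : Type}
    (Atnv : List (EL (V ⊕ K) R))
    (hflat : ∀ D ∈ Atnv,
      (∃ A : K, D = EL.name (Sum.inr A)) ∨ ∃ (r : R) (N' : V ⊕ K), D = EL.ex r (EL.name N'))
    (σ : V → EL (V ⊕ K) R) :
    (∀ X : V, ¬ Relation.TransGen
        (fun X Y : V => ∃ D ∈ Atnv, Subsume (σ X) (applySub σ D) ∧ occursVar Y D) X X) ∧
    ∃ σS : V → EL (V ⊕ K) R,
      (∀ X : V, isGround (σS X)) ∧
      (∀ (X : V) (E : EL (V ⊕ K) R), Subsume E (σS X) ↔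
        ∀ D ∈ Atnv, Subsume (σ X) (applySub σ D) → Subsume E (applySub σS D)) ∧
      ∀ C : EL (V ⊕ K) R, Subsume (applySub σ C) (applySub σS C) := by
  have hwf := wellFounded_swap_occursInAssignment (σ := σ) hflat
  refine ⟨fun X hX => hwf.transGen.irrefl.irrefl X (Relation.transGen_swap.2 hX),
    localSub hwf, isGround_localSub hwf, subsume_localSub_iff hwf, fun C => ?_⟩
  exact subsume_applySub fun Y _ => subsume_localSub hwf Y

theorem stmt19 {V K R : Type} [Fintype V]
    (Γsub : List (EL (V ⊕ K) R × EL (V ⊕ K) R))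
    (Γdissub : List (EL (V ⊕ K) R × EL (V ⊕ K) R))
    (Atnv : List (EL (V ⊕ K) R))
    (hflat : ∀ D ∈ Atnv,
      (∃ A : K, D = EL.name (Sum.inr A)) ∨ ∃ (r : R) (N' : V ⊕ K), D = EL.ex r (EL.name N'))
    (σ : V → EL (V ⊕ K) R) (hg : ∀ X : V, isGround (σ X))
    (hsolp : ∀ p ∈ Γsub, Subsume (applySub σ p.1) (applySub σ p.2))
    (hsoln : ∀ p ∈ Γdissub, ¬ Subsume (applySub σ p.1) (applySub σ p.2)) :
    (∀ X : V, ¬ Relation.TransGen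
        (fun X Y : V => ∃ D ∈ Atnv, Subsume (σ X) (applySub σ D) ∧ occursVar Y D) X X) ∧
    ∃ σS : V → EL (V ⊕ K) R,
      (∀ X : V, isGround (σS X)) ∧
      (∀ (X : V) (E : EL (V ⊕ K) R), Subsume E (σS X) ↔
        ∀ D ∈ Atnv, Subsume (σ X) (applySub σ D) → Subsume E (applySub σS D)) ∧
      ∀ C : EL (V ⊕ K) R, Subsume (applySub σ C) (applySub σS C) :=
  stmt19_general Atnv hflat σ
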